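/- For every a = (a_1,…,a_d) ∈ ℕ^d and every x ∈ ℕ^d, the composite operator g^a := g_1^{a_1} ∘ ⋯ ∘ g_d^{a_d} satisfies n(g^a(x)) = n(x) + (a_1 + ⋯ + a_d) and W(g^a(x)) = W(x) + (0·a_1 + 1·a_2 + ⋯ + (d−1)·a_d). -/

import Mathlib

namespace Spiral

/-- The size `n(x) = n₁ + ⋯ + n_d` of a configuration `x ∈ ℕ^d`. -/
def size {d : ℕ} (x : Fin d → ℕ) : ℕ := ∑ i, x i

/-- The weight `W(x) = Σ_{i<j} (max(0, x_j − x_i) + max(0, x_i − x_j − 1))`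
(truncated ℕ-subtraction realizes the `max(0,·)`). -/
def weight {d : ℕ} (x : Fin d → ℕ) : ℕ :=
  ∑ i : Fin d, ∑ j : Fin d, if i < j then (x j - x i) + (x i - x j - 1) else 0

/-- The configuration `x` as a set of points of `[d] × ℕ`: the point `(i, n)` (seat `i`
0-indexed, level `n`) is encoded as the natural number `n*d + i`. The usual order on the
encodings is exactly the height order `≺` (height `h(i,n) = n + i/d`), and the spiral
shift `δ + s/d` is encoded as `+ s`. -/
def pts (d : ℕ) (x : Fin d → ℕ) : Finset ℕ :=
  Finset.image (fun i : Fin d => x i * d + i.val) Finset.univ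

/-- The points of `x` listed in increasing height order: `δ¹(x), …, δ^d(x)`. -/
def sortedPts (d : ℕ) (x : Fin d → ℕ) : List ℕ :=
  (pts d x).sort (· ≤ ·)

/-- The lowest point strictly above `p` (along the spiral) whose seat lies in `S`. -/
noncomputable def nextPt (d : ℕ) (S : Finset ℕ) (p : ℕ) : ℕ :=
  sInf {q : ℕ | p < q ∧ q % d ∈ S}

/-- The spiral shifting operator `g_j` (for `1 ≤ j ≤ d`): it fixes the lowest `j - 1`
points `δ¹(x), …, δ^{j-1}(x)` and moves each remaining point `δ^k(x)` (`k ≥ j`) to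
`δ^k(x) + s_k/d`, where `s_k` is the minimal positive integer such that the seat of
`δ^k(x) + s_k/d` lies in `{i(δ^j(x)), …, i(δ^d(x))}`. The resulting configuration is read
off from the new point set (which has exactly one point per seat). -/
noncomputable def gOp (d : ℕ) (j : ℕ) (x : Fin d → ℕ) : Fin d → ℕ := fun i =>
  let L := sortedPts d x
  let low := L.take (j - 1)
  let high := L.drop (j - 1)
  let S : Finset ℕ := high.toFinset.image (· % d)
  let Q : Finset ℕ := low.toFinset ∪ (high.map (nextPt d S)).toFinset
  ∑ q ∈ Q.filter (fun q => q % d = i.val), q / d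

/-- `g^a := g₁^{a₁} ∘ ⋯ ∘ g_d^{a_d}` (here `a i` is the exponent of `g_{i+1}`). -/
noncomputable def gIter (d : ℕ) (a : Fin d → ℕ) (x : Fin d → ℕ) : Fin d → ℕ :=
  (List.finRange d).foldr (fun j y => (gOp d (j.val + 1))^[a j] y) x

end Spiral

/-!
Encode the point `(i, n)` as `n * d + i`. A configuration becomes a set of `d` naturals with
pairwise distinct residues mod `d`; its size is `∑ ⌊q/d⌋` and its weight is `∑_{p<q} ⌊(q-p)/d⌋`.
The operator `g_j` keeps the lowest `j - 1` points `L` and moves every other point `b ∈ H` to the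
next natural whose residue is a seat of `H`. This successor map is `d`-periodic and monotone, so it
preserves `⌊(q-p)/d⌋` for `p < q` in `H` and the set of residues of `H`, while its total
displacement is `d` (the gaps between the seats of `H` go once around `ℤ/d`). Over a set of points
above `a` with fixed residues, `∑ ⌊(b-a)/d⌋` only depends on `∑ b`, so adding `d` to `∑ b` raises
it by one: this gives the new unit of size, and one unit of weight for each point of `L`.
-/

namespace Spiral

open Finset

variable {d : ℕ}

theorem sum_sum_eq_sum_sum_ite_lt {ι M : Type*} [LinearOrder ι] [Fintype ι] [AddCommMonoid M]
    (F : ι → ι → M) (hF : ∀ i, F i i = 0) :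
    ∑ i, ∑ j, F i j = ∑ i, ∑ j, if i < j then F i j + F j i else 0 := by
  have hsplit : ∀ i j, F i j = (if i < j then F i j else 0) + (if j < i then F i j else 0) := by
    intro i j
    rcases lt_trichotomy i j with h | rfl | h
    · simp [h, h.not_gt]
    · simp [hF]
    · simp [h, h.not_gt]
  calc ∑ i, ∑ j, F i j
      = ∑ i, ∑ j, (if i < j then F i j else 0) + ∑ i, ∑ j, (if j < i then F i j else 0) := by
        simp only [← sum_add_distrib, ← hsplit]
    _ = ∑ i, ∑ j, (if i < j then F i j else 0) + ∑ i, ∑ j, (if i < j then F j i else 0) := by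
        rw [sum_comm (f := fun i j => if j < i then F i j else 0)]
    _ = _ := by simp only [← sum_add_distrib, ite_add_ite, add_zero]

section NextPoint

variable {S : Finset ℕ} {p q : ℕ}

theorem nextPt_spec (hd : 0 < d) (hp : p % d ∈ S) :
    p < nextPt d S p ∧ nextPt d S p % d ∈ S :=
  Nat.sInf_mem (s := {q | p < q ∧ q % d ∈ S}) ⟨p + d, by omega, by rwa [Nat.add_mod_right]⟩

theorem nextPt_le (hpq : p < q) (hq : q % d ∈ S) : nextPt d S p ≤ q :=
  Nat.sInf_le ⟨hpq, hq⟩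

theorem nextPt_strictMonoOn (hd : 0 < d) : StrictMonoOn (nextPt d S) {q | q % d ∈ S} :=
  fun _ _ _ hq hpq => (nextPt_le hpq hq).trans_lt (nextPt_spec hd hq).1

theorem nextPt_add_mul (hd : 0 < d) (hp : p % d ∈ S) (k : ℕ) :
    nextPt d S (p + d * k) = nextPt d S p + d * k := by
  obtain ⟨hlt, hmem⟩ := nextPt_spec hd hp
  obtain ⟨hlt', hmem'⟩ := nextPt_spec (p := p + d * k) hd (by rwa [Nat.add_mul_mod_self_left])
  have hup : nextPt d S (p + d * k) ≤ nextPt d S p + d * k :=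
    nextPt_le (by omega) (by rwa [Nat.add_mul_mod_self_left])
  obtain ⟨m, hm⟩ : ∃ m, nextPt d S (p + d * k) = m + d * k :=
    ⟨_, (Nat.sub_add_cancel (by omega)).symm⟩
  rw [hm] at hlt' hmem' hup ⊢
  rw [Nat.add_mul_mod_self_left] at hmem'
  have : nextPt d S p ≤ m := nextPt_le (by omega) hmem'
  omega

theorem nextPt_sub_self (hd : 0 < d) (hp : p % d ∈ S) :
    nextPt d S p - p = nextPt d S (p % d) - p % d := by
  have h := nextPt_add_mul hd (p := p % d) (by rwa [Nat.mod_mod]) (p / d)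
  rw [Nat.mod_add_div] at h
  have := Nat.mod_add_div p d
  omega

theorem nextPt_mod (hd : 0 < d) (hp : p % d ∈ S) :
    nextPt d S p % d = nextPt d S (p % d) % d := by
  have h := nextPt_add_mul hd (p := p % d) (by rwa [Nat.mod_mod]) (p / d)
  rw [Nat.mod_add_div] at h
  rw [h, Nat.add_mul_mod_self_left]

-- Compare with the points `p + d * k` and `p + d * (k + 1)` of seat `p % d`, `k = ⌊(q - p)/d⌋`.
theorem nextPt_sub_nextPt_div (hd : 0 < d) (hp : p % d ∈ S) (hq : q % d ∈ S) (hpq : p ≤ q) :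
    (nextPt d S q - nextPt d S p) / d = (q - p) / d := by
  set k := (q - p) / d
  have hlo : d * k ≤ q - p := Nat.mul_div_le (q - p) d
  have hhi : q - p < d * k + d := by simpa [mul_add] using Nat.lt_mul_div_succ (q - p) hd
  have hp' := (nextPt_spec hd hp).1
  have hup : nextPt d S q ≤ p + d * k + d :=
    nextPt_le (by omega) (by rwa [Nat.add_mod_right, Nat.add_mul_mod_self_left])
  have hdown : nextPt d S p + d * k ≤ nextPt d S q := by
    rw [← nextPt_add_mul hd hp]
    exact (nextPt_strictMonoOn hd).monotoneOn (by simpa [Nat.add_mul_mod_self_left] using hp) hq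
      (by omega)
  have e : (k + 1) * d = d * k + d := by ring
  exact Nat.div_eq_of_lt_le (by rw [mul_comm]; omega) (by omega)

end NextPoint

section Circle

variable {S : Finset ℕ}

theorem image_nextPt_eq (hd : 0 < d) (hS : S.Nonempty) (hSd : ∀ r ∈ S, r < d) :
    S.image (nextPt d S) = insert (S.min' hS + d) (S.erase (S.min' hS)) := by
  set c := S.min' hS
  have hc : c ∈ S := S.min'_mem hS
  have hmod : ∀ r ∈ S, r % d ∈ S := fun r hr => by rwa [Nat.mod_eq_of_lt (hSd r hr)]
  apply Finset.eq_of_subset_of_card_le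
  · intro n hn
    obtain ⟨r, hr, rfl⟩ := mem_image.1 hn
    obtain ⟨hlt, hmem⟩ := nextPt_spec hd (hmod r hr)
    have hle : nextPt d S r ≤ c + d := nextPt_le (by have := hSd r hr; omega)
      (by rwa [Nat.add_mod_right, Nat.mod_eq_of_lt (hSd c hc)])
    have hcr : c ≤ r := S.min'_le r hr
    rw [mem_insert, mem_erase]
    rcases hle.eq_or_lt with h | h
    · exact Or.inl h
    · by_cases hnd : nextPt d S r < d
      · rw [Nat.mod_eq_of_lt hnd] at hmem
        exact Or.inr ⟨by omega, hmem⟩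
      · have := hSd c hc
        have hsub : nextPt d S r % d = nextPt d S r - d := by
          rw [Nat.mod_eq_sub_mod (by omega), Nat.mod_eq_of_lt (by omega)]
        have := S.min'_le _ hmem
        omega
  · rw [card_insert_of_notMem (fun h => by have := hSd _ (mem_of_mem_erase h); omega),
      card_erase_of_mem hc, Nat.sub_add_cancel (card_pos.2 hS),
      card_image_of_injOn ((nextPt_strictMonoOn hd).mono hmod).injOn]

theorem sum_nextPt_sub_self (hd : 0 < d) (hS : S.Nonempty) (hSd : ∀ r ∈ S, r < d) :
    ∑ r ∈ S, (nextPt d S r - r) = d := by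
  have hmod : ∀ r ∈ S, r % d ∈ S := fun r hr => by rwa [Nat.mod_eq_of_lt (hSd r hr)]
  have hc := S.min'_mem hS
  have hsum : ∑ r ∈ S, nextPt d S r = ∑ r ∈ S, r + d := by
    rw [show ∑ r ∈ S, nextPt d S r = ∑ n ∈ S.image (nextPt d S), n from
        (sum_image (f := fun n => n) ((nextPt_strictMonoOn hd).mono hmod).injOn).symm,
      image_nextPt_eq hd hS hSd,
      sum_insert (fun h => by have := hSd _ (mem_of_mem_erase h); omega),
      ← add_sum_erase S (fun r => r) hc]
    ring
  rw [sum_tsub_distrib _ fun r hr => (nextPt_spec hd (hmod r hr)).1.le, hsum]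
  omega

theorem image_nextPt_mod (hd : 0 < d) (hS : S.Nonempty) (hSd : ∀ r ∈ S, r < d) :
    S.image (fun r => nextPt d S r % d) = S := by
  change S.image ((· % d) ∘ nextPt d S) = S
  rw [← image_image, image_nextPt_eq hd hS hSd, image_insert, Nat.add_mod_right,
    Nat.mod_eq_of_lt (hSd _ (S.min'_mem hS)), image_congr (g := id), image_id,
    insert_erase (S.min'_mem hS)]
  intro r hr
  exact Nat.mod_eq_of_lt (hSd r (mem_of_mem_erase hr))

end Circle

section Residues

variable {a : ℕ}

theorem sub_mod_eq_mod_add_sub_mod (hd : 0 < d) {b : ℕ} (hab : a ≤ b) :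
    (b - a) % d = (b % d + (d - a % d)) % d := by
  apply Nat.ModEq.add_right_cancel' a
  have h1 := Nat.mod_add_div a d
  have h2 := Nat.mod_lt a hd
  have h3 : b % d + (d - a % d) + a = b % d + d * (a / d + 1) := by rw [mul_add, mul_one]; omega
  rw [Nat.sub_add_cancel hab, h3]
  unfold Nat.ModEq
  rw [Nat.add_mul_mod_self_left, Nat.mod_mod]

theorem mul_sum_sub_div_add_sum_image_mod {B : Finset ℕ} (hd : 0 < d) (ha : ∀ b ∈ B, a ≤ b)
    (hB : Set.InjOn (· % d) B) :
    d * ∑ b ∈ B, (b - a) / d + ∑ r ∈ B.image (· % d), (r + (d - a % d)) % d + B.card * a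
      = ∑ b ∈ B, b := by
  rw [sum_image hB, mul_sum, ← sum_add_distrib, card_eq_sum_ones, sum_mul, ← sum_add_distrib]
  refine sum_congr rfl fun b hb => ?_
  rw [← sub_mod_eq_mod_add_sub_mod hd (ha b hb)]
  have := Nat.div_add_mod (b - a) d
  have := ha b hb
  omega

theorem sum_sub_div_eq_add_one {B N : Finset ℕ} (hd : 0 < d) (hB : ∀ b ∈ B, a ≤ b)
    (hN : ∀ n ∈ N, a ≤ n) (hBinj : Set.InjOn (· % d) B) (hNinj : Set.InjOn (· % d) N)
    (himg : N.image (· % d) = B.image (· % d)) (hsum : ∑ n ∈ N, n = ∑ b ∈ B, b + d) :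
    ∑ n ∈ N, (n - a) / d = ∑ b ∈ B, (b - a) / d + 1 := by
  have hcard : N.card = B.card := by
    rw [← card_image_of_injOn hNinj, himg, card_image_of_injOn hBinj]
  have eN := mul_sum_sub_div_add_sum_image_mod hd hN hNinj
  have eB := mul_sum_sub_div_add_sum_image_mod hd hB hBinj
  rw [himg, hcard] at eN
  apply Nat.eq_of_mul_eq_mul_left hd
  rw [mul_add, mul_one]
  omega

end Residues

theorem disjoint_of_forall_lt {α : Type*} [Preorder α] {A B : Finset α}
    (hAB : ∀ a ∈ A, ∀ b ∈ B, a < b) : Disjoint A B :=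
  disjoint_left.2 fun a ha hb => lt_irrefl a (hAB a ha a hb)

def pairWeight (d : ℕ) (Q : Finset ℕ) : ℕ :=
  ∑ p ∈ Q, ∑ q ∈ Q, if p < q then (q - p) / d else 0

theorem pairWeight_union_of_lt {A B : Finset ℕ} (hAB : ∀ a ∈ A, ∀ b ∈ B, a < b) :
    pairWeight d (A ∪ B) = pairWeight d A + pairWeight d B + ∑ a ∈ A, ∑ b ∈ B, (b - a) / d := by
  simp only [pairWeight, sum_union (disjoint_of_forall_lt hAB), sum_add_distrib]
  have hAB' : ∑ a ∈ A, ∑ b ∈ B, (if a < b then (b - a) / d else 0)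
      = ∑ a ∈ A, ∑ b ∈ B, (b - a) / d :=
    sum_congr rfl fun a ha => sum_congr rfl fun b hb => if_pos (hAB a ha b hb)
  have hBA : ∑ b ∈ B, ∑ a ∈ A, (if b < a then (a - b) / d else 0) = 0 :=
    sum_eq_zero fun b hb => sum_eq_zero fun a ha => if_neg (hAB a ha b hb).not_gt
  rw [hAB', hBA]
  ring

theorem pairWeight_image {f : ℕ → ℕ} {Q : Finset ℕ} (hf : StrictMonoOn f Q)
    (hdiv : ∀ p ∈ Q, ∀ q ∈ Q, p < q → (f q - f p) / d = (q - p) / d) :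
    pairWeight d (Q.image f) = pairWeight d Q := by
  unfold pairWeight
  rw [sum_image hf.injOn]
  refine sum_congr rfl fun p hp => ?_
  rw [sum_image hf.injOn]
  refine sum_congr rfl fun q hq => ?_
  by_cases hpq : p < q
  · rw [if_pos (hf hp hq hpq), if_pos hpq, hdiv p hp q hq hpq]
  · rw [if_neg ((hf.lt_iff_lt hp hq).not.2 hpq), if_neg hpq]

/-- The new positions of the moving points `H` of `g_j`. -/
noncomputable def shift (d : ℕ) (H : Finset ℕ) : Finset ℕ :=
  H.image (nextPt d (H.image (· % d)))

section Shift

variable {H : Finset ℕ}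

theorem strictMonoOn_nextPt_image_mod (hd : 0 < d) :
    StrictMonoOn (nextPt d (H.image (· % d))) H :=
  (nextPt_strictMonoOn hd).mono fun _ hb => mem_image_of_mem (f := (· % d)) hb

theorem mod_lt_of_mem_image_mod (hd : 0 < d) {r : ℕ} (hr : r ∈ H.image (· % d)) : r < d := by
  obtain ⟨b, -, rfl⟩ := mem_image.1 hr
  exact Nat.mod_lt b hd

theorem exists_lt_of_mem_shift (hd : 0 < d) {n : ℕ} (hn : n ∈ shift d H) : ∃ b ∈ H, b < n := by
  rw [shift, mem_image] at hn
  obtain ⟨b, hb, rfl⟩ := hn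
  exact ⟨b, hb, (nextPt_spec hd (mem_image_of_mem (f := (· % d)) hb)).1⟩

theorem card_shift (hd : 0 < d) : (shift d H).card = H.card :=
  card_image_of_injOn (strictMonoOn_nextPt_image_mod hd).injOn

theorem image_mod_shift (hd : 0 < d) : (shift d H).image (· % d) = H.image (· % d) := by
  rcases H.eq_empty_or_nonempty with rfl | hH
  · rfl
  calc (shift d H).image (· % d)
      = (H.image (· % d)).image (fun r => nextPt d (H.image (· % d)) r % d) := by
        rw [shift, image_image, image_image]
        exact image_congr fun b hb => nextPt_mod hd (mem_image_of_mem _ hb)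
    _ = H.image (· % d) := image_nextPt_mod hd (hH.image _) fun _ => mod_lt_of_mem_image_mod hd

theorem injOn_mod_shift (hd : 0 < d) (hinj : Set.InjOn (· % d) H) :
    Set.InjOn (· % d) (shift d H) := by
  rw [← card_image_iff, image_mod_shift hd, card_image_of_injOn hinj, card_shift hd]

theorem sum_shift (hd : 0 < d) (hH : H.Nonempty) (hinj : Set.InjOn (· % d) H) :
    ∑ n ∈ shift d H, n = ∑ b ∈ H, b + d := by
  have hS : ∀ b ∈ H, b % d ∈ H.image (· % d) := fun b hb => mem_image_of_mem _ hb
  have hgaps : ∑ b ∈ H, (nextPt d (H.image (· % d)) b - b) = d := by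
    rw [sum_congr rfl fun b hb => nextPt_sub_self hd (hS b hb)]
    exact (sum_image (f := fun r => nextPt d (H.image (· % d)) r - r) hinj).symm.trans
      (sum_nextPt_sub_self hd (hH.image _) fun _ => mod_lt_of_mem_image_mod hd)
  calc ∑ n ∈ shift d H, n = ∑ b ∈ H, (b + (nextPt d (H.image (· % d)) b - b)) := by
        rw [shift, sum_image (strictMonoOn_nextPt_image_mod hd).injOn]
        refine sum_congr rfl fun b hb => ?_
        have := (nextPt_spec hd (hS b hb)).1
        omega
    _ = ∑ b ∈ H, b + d := by rw [sum_add_distrib, hgaps]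

theorem pairWeight_shift (hd : 0 < d) : pairWeight d (shift d H) = pairWeight d H :=
  pairWeight_image (strictMonoOn_nextPt_image_mod hd) fun _ hp _ hq hpq =>
    nextPt_sub_nextPt_div hd (mem_image_of_mem _ hp) (mem_image_of_mem _ hq) hpq.le

theorem sum_shift_sub_div (hd : 0 < d) (hH : H.Nonempty) (hinj : Set.InjOn (· % d) H) {a : ℕ}
    (ha : ∀ b ∈ H, a ≤ b) :
    ∑ n ∈ shift d H, (n - a) / d = ∑ b ∈ H, (b - a) / d + 1 := by
  refine sum_sub_div_eq_add_one hd ha (fun n hn => ?_) hinj (injOn_mod_shift hd hinj)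
    (image_mod_shift hd) (sum_shift hd hH hinj)
  obtain ⟨b, hb, hbn⟩ := exists_lt_of_mem_shift hd hn
  exact (ha b hb).trans hbn.le

variable {L : Finset ℕ}

theorem image_mod_union_shift (hd : 0 < d) :
    (L ∪ shift d H).image (· % d) = (L ∪ H).image (· % d) := by
  rw [image_union, image_union, image_mod_shift hd]

theorem lt_of_mem_shift (hd : 0 < d) (hLH : ∀ a ∈ L, ∀ b ∈ H, a < b) :
    ∀ a ∈ L, ∀ n ∈ shift d H, a < n := fun a ha _ hn =>
  let ⟨b, hb, hbn⟩ := exists_lt_of_mem_shift hd hn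
  (hLH a ha b hb).trans hbn

theorem injOn_mod_union_shift (hd : 0 < d) (hLH : ∀ a ∈ L, ∀ b ∈ H, a < b)
    (hinj : Set.InjOn (· % d) (L ∪ H : Finset ℕ)) :
    Set.InjOn (· % d) (L ∪ shift d H : Finset ℕ) := by
  rw [← card_image_iff]
  refine le_antisymm card_image_le ?_
  calc (L ∪ shift d H).card ≤ L.card + (shift d H).card := card_union_le _ _
    _ = ((L ∪ H).image (· % d)).card := by
      rw [card_shift hd, ← card_union_of_disjoint (disjoint_of_forall_lt hLH),
        card_image_of_injOn hinj]
    _ = ((L ∪ shift d H).image (· % d)).card := by rw [image_mod_union_shift hd]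

theorem sum_div_union_shift (hd : 0 < d) (hLH : ∀ a ∈ L, ∀ b ∈ H, a < b) (hH : H.Nonempty)
    (hinj : Set.InjOn (· % d) (L ∪ H : Finset ℕ)) :
    ∑ q ∈ L ∪ shift d H, q / d = ∑ q ∈ L ∪ H, q / d + 1 := by
  have hsum : ∑ q ∈ L ∪ shift d H, q = ∑ q ∈ L ∪ H, q + d := by
    rw [sum_union (disjoint_of_forall_lt (lt_of_mem_shift hd hLH)),
      sum_union (disjoint_of_forall_lt hLH),
      sum_shift hd hH (hinj.mono (coe_subset.2 subset_union_right)), add_assoc]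
  simpa only [Nat.sub_zero] using sum_sub_div_eq_add_one (a := 0) hd (fun _ _ => Nat.zero_le _)
    (fun _ _ => Nat.zero_le _) hinj (injOn_mod_union_shift hd hLH hinj)
    (image_mod_union_shift hd) hsum

theorem pairWeight_union_shift (hd : 0 < d) (hLH : ∀ a ∈ L, ∀ b ∈ H, a < b) (hH : H.Nonempty)
    (hinj : Set.InjOn (· % d) (L ∪ H : Finset ℕ)) :
    pairWeight d (L ∪ shift d H) = pairWeight d (L ∪ H) + L.card := by
  have hinjH := hinj.mono (coe_subset.2 subset_union_right)
  rw [pairWeight_union_of_lt (lt_of_mem_shift hd hLH), pairWeight_union_of_lt hLH,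
    pairWeight_shift hd,
    sum_congr rfl fun a ha => sum_shift_sub_div hd hH hinjH fun b hb => (hLH a ha b hb).le,
    sum_add_distrib, card_eq_sum_ones]
  ring

end Shift

section Configuration

variable (x : Fin d → ℕ)

theorem encode_mod (n : ℕ) (i : Fin d) : (n * d + i) % d = i := by
  rw [Nat.mul_comm, Nat.mul_add_mod, Nat.mod_eq_of_lt i.isLt]

theorem encode_div (n : ℕ) (i : Fin d) : (n * d + i) / d = n := by
  rw [Nat.mul_comm, Nat.mul_add_div i.pos, Nat.div_eq_of_lt i.isLt, add_zero]

theorem injective_encode : Function.Injective fun i : Fin d => x i * d + i := fun i j h =>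
  Fin.ext (by simpa only [encode_mod] using congrArg (· % d) h)

theorem mem_pts {q : ℕ} : q ∈ pts d x ↔ ∃ i : Fin d, x i * d + i = q := by
  simp [pts]

theorem card_pts : (pts d x).card = d := by
  rw [pts, card_image_of_injective _ (injective_encode x), card_univ, Fintype.card_fin]

theorem image_mod_pts : (pts d x).image (· % d) = range d := by
  ext r
  simp only [pts, image_image, mem_image, mem_univ, true_and, mem_range, Function.comp_def,
    encode_mod]
  exact ⟨fun ⟨i, hi⟩ => hi ▸ i.isLt, fun hr => ⟨⟨r, hr⟩, rfl⟩⟩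

theorem injOn_mod_pts : Set.InjOn (· % d) (pts d x) := by
  rw [← card_image_iff, image_mod_pts, card_range, card_pts]

theorem size_eq_sum_pts : size x = ∑ q ∈ pts d x, q / d := by
  rw [pts, sum_image fun i _ j _ h => injective_encode x h]
  simp only [encode_div]
  rfl

theorem encode_pair {i j : ℕ} (hij : i < j) (hj : j < d) (u v : ℕ) :
    (v - u) + (u - v - 1)
      = (if u * d + i < v * d + j then (v * d + j - (u * d + i)) / d else 0)
        + (if v * d + j < u * d + i then (u * d + i - (v * d + j)) / d else 0) := by
  rcases le_or_gt u v with huv | hvu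
  · obtain ⟨k, rfl⟩ := Nat.exists_eq_add_of_le huv
    have e1 : (u + k) * d = u * d + k * d := by ring
    have e2 : (k + 1) * d = k * d + d := by ring
    rw [if_pos (by omega), if_neg (by omega), Nat.div_eq_of_lt_le (k := k) (by omega) (by omega)]
    omega
  · obtain ⟨k, rfl⟩ := Nat.exists_eq_add_of_lt hvu
    have e1 : (v + k + 1) * d = v * d + k * d + d := by ring
    have e2 : (k + 1) * d = k * d + d := by ring
    rw [if_neg (by omega), if_pos (by omega), Nat.div_eq_of_lt_le (k := k) (by omega) (by omega)]
    omega

theorem weight_eq_pairWeight : weight x = pairWeight d (pts d x) := by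
  have hinj : Set.InjOn (fun i : Fin d => x i * d + i) (univ : Finset (Fin d)) :=
    (injective_encode x).injOn
  rw [pairWeight, pts, sum_image hinj]
  simp_rw [sum_image hinj]
  rw [sum_sum_eq_sum_sum_ite_lt _ fun i => by simp, weight]
  refine sum_congr rfl fun i _ => sum_congr rfl fun j _ => ?_
  by_cases hij : i < j
  · rw [if_pos hij, if_pos hij]
    exact encode_pair hij j.isLt (x i) (x j)
  · rw [if_neg hij, if_neg hij]

theorem pts_eq_of_image_mod {Q : Finset ℕ} (hQ : Q.image (· % d) = range d)
    (hinj : Set.InjOn (· % d) Q) :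
    pts d (fun i => ∑ q ∈ Q.filter (fun q => q % d = i.val), q / d) = Q := by
  have hfilter : ∀ i : Fin d, ∃ q ∈ Q, q % d = i ∧ Q.filter (fun q => q % d = i.val) = {q} := by
    intro i
    obtain ⟨q, hq, hqi⟩ := mem_image.1 (hQ ▸ mem_range.2 i.isLt)
    refine ⟨q, hq, hqi, ext fun p => ?_⟩
    simp only [mem_filter, mem_singleton]
    exact ⟨fun ⟨hp, hpi⟩ => hinj hp hq (hpi.trans hqi.symm), fun h => h ▸ ⟨hq, hqi⟩⟩
  apply eq_of_subset_of_card_le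
  · intro p hp
    obtain ⟨i, rfl⟩ := (mem_pts _).1 hp
    obtain ⟨q, hq, hqi, hf⟩ := hfilter i
    rw [hf, sum_singleton, ← hqi, Nat.div_add_mod']
    exact hq
  · rw [card_pts, ← card_image_of_injOn hinj, hQ, card_range]

end Configuration

section Operator

variable {j : ℕ} (x : Fin d → ℕ)

def lowPts (d j : ℕ) (x : Fin d → ℕ) : Finset ℕ := ((sortedPts d x).take (j - 1)).toFinset

def highPts (d j : ℕ) (x : Fin d → ℕ) : Finset ℕ := ((sortedPts d x).drop (j - 1)).toFinset

theorem lowPts_union_highPts : lowPts d j x ∪ highPts d j x = pts d x := by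
  rw [lowPts, highPts, ← List.toFinset_append, List.take_append_drop, sortedPts, sort_toFinset]

theorem lt_of_mem_lowPts_of_mem_highPts : ∀ a ∈ lowPts d j x, ∀ b ∈ highPts d j x, a < b := by
  have h : (sortedPts d x).Pairwise (· < ·) := (sortedLT_sort _).pairwise
  rw [← List.take_append_drop (j - 1) (sortedPts d x)] at h
  intro a ha b hb
  exact (List.pairwise_append.1 h).2.2 a (List.mem_toFinset.1 ha) b (List.mem_toFinset.1 hb)

theorem length_sortedPts : (sortedPts d x).length = d := by
  rw [sortedPts, length_sort, card_pts]

theorem card_lowPts (hj : j - 1 ≤ d) : (lowPts d j x).card = j - 1 := by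
  have hnd : (sortedPts d x).Nodup := sort_nodup _ _
  rw [lowPts, List.toFinset_card_of_nodup (hnd.sublist (List.take_sublist _ _)),
    List.length_take, length_sortedPts]
  omega

theorem highPts_nonempty (hj : j - 1 < d) : (highPts d j x).Nonempty := by
  rw [highPts, List.toFinset_nonempty_iff, Ne, List.drop_eq_nil_iff, length_sortedPts]
  omega

theorem injOn_mod_lowPts_union_highPts :
    Set.InjOn (· % d) (lowPts d j x ∪ highPts d j x : Finset ℕ) := by
  rw [lowPts_union_highPts]
  exact injOn_mod_pts x

theorem pts_gOp (hj : j - 1 < d) :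
    pts d (gOp d j x) = lowPts d j x ∪ shift d (highPts d j x) := by
  have hd : 0 < d := by omega
  have hgOp : gOp d j x = fun i => ∑ q ∈ (lowPts d j x ∪ shift d (highPts d j x)).filter
      (fun q => q % d = i.val), q / d := by
    have hmap (l : List ℕ) (f : ℕ → ℕ) : (l.map f).toFinset = l.toFinset.image f := by
      ext
      simp
    funext i
    simp only [gOp, hmap]
    rfl
  rw [hgOp]
  exact pts_eq_of_image_mod
    (by rw [image_mod_union_shift hd, lowPts_union_highPts, image_mod_pts])
    (injOn_mod_union_shift hd (lt_of_mem_lowPts_of_mem_highPts x)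
      (injOn_mod_lowPts_union_highPts x))

theorem size_gOp (hj : j - 1 < d) : size (gOp d j x) = size x + 1 := by
  rw [size_eq_sum_pts, pts_gOp x hj,
    sum_div_union_shift (by omega) (lt_of_mem_lowPts_of_mem_highPts x) (highPts_nonempty x hj)
      (injOn_mod_lowPts_union_highPts x),
    lowPts_union_highPts, ← size_eq_sum_pts]

theorem weight_gOp (hj : j - 1 < d) : weight (gOp d j x) = weight x + (j - 1) := by
  rw [weight_eq_pairWeight, pts_gOp x hj,
    pairWeight_union_shift (by omega) (lt_of_mem_lowPts_of_mem_highPts x) (highPts_nonempty x hj)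
      (injOn_mod_lowPts_union_highPts x),
    lowPts_union_highPts, ← weight_eq_pairWeight, card_lowPts x hj.le]

end Operator

theorem apply_foldr_iterate {α ι M : Type*} [AddCommMonoid M] (φ : α → M) (g : ι → α → α)
    (c : ι → M) (hφ : ∀ i y, φ (g i y) = φ y + c i) (a : ι → ℕ) (l : List ι) (y : α) :
    φ (l.foldr (fun i z => (g i)^[a i] z) y) = φ y + (l.map fun i => a i • c i).sum := by
  induction l with
  | nil => simp
  | cons i l ih =>
    have hsemi : Function.Semiconj φ (g i) (· + c i) := hφ i
    rw [List.foldr_cons, (hsemi.iterate_right (a i)).eq, add_right_iterate, ih, List.map_cons,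
      List.sum_cons]
    exact (add_assoc _ _ _).trans (congrArg _ (add_comm _ _))

end Spiral

open Spiral in
theorem statement16_general (d : ℕ) (a : Fin d → ℕ) (x : Fin d → ℕ) :
    size (gIter d a x) = size x + ∑ i, a i ∧
    weight (gIter d a x) = weight x + ∑ i : Fin d, i.val * a i := by
  have hj (i : Fin d) : i.val + 1 - 1 < d := by simp
  refine ⟨(apply_foldr_iterate size (fun i : Fin d => gOp d (i.val + 1)) (fun _ => 1)
      (fun i y => size_gOp y (hj i)) a _ x).trans ?_,
    (apply_foldr_iterate weight (fun i : Fin d => gOp d (i.val + 1)) (fun i => i.val)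
      (fun i y => weight_gOp y (hj i)) a _ x).trans ?_⟩
  · simp [Fin.sum_univ_def]
  · simp [Fin.sum_univ_def, mul_comm]

open Spiral in
/-- For every `a = (a₁,…,a_d) ∈ ℕ^d` and every `x ∈ ℕ^d`, the composite
`g^a := g₁^{a₁} ∘ ⋯ ∘ g_d^{a_d}` satisfies `n(g^a(x)) = n(x) + (a₁ + ⋯ + a_d)` and
`W(g^a(x)) = W(x) + (0·a₁ + 1·a₂ + ⋯ + (d−1)·a_d)` (in the 0-indexed exponent vector,
`a i` is the exponent of `g_{i+1}`, contributing `i·(a i)` to the weight). -/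
theorem statement16 (d : ℕ) (hd : 1 ≤ d) (a : Fin d → ℕ) (x : Fin d → ℕ) :
    size (gIter d a x) = size x + ∑ i, a i ∧
    weight (gIter d a x) = weight x + ∑ i : Fin d, i.val * a i :=
  statement16_general d a x
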